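/- Let q, a, β be complex numbers with |q| < 1, a ≠ 0, q ≠ 0, and β q^j ≠ 1 for all integers j ≥ 0, and let n ≥ 1 be an integer (so that the points q^1/a, …, q^{n+1}/a are pairwise distinct, which holds since |q| < 1 and q ≠ 0). Then the n-th iterated divided difference of the function x ↦ 1/( (a β x q^{n−1}; q)_∞ ) at the points x_j = q^j/a (1 ≤ j ≤ n+1) satisfies Σ_{j=1}^{n+1} [ 1/( (β q^{n+j−1}; q)_∞ ) ] / ∏_{1 ≤ l ≤ n+1, l ≠ j} (q^j/a − q^l/a) = (a β)^n q^{n(n−1)} / ( (q; q)_n (β q^n; q)_∞ ). -/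

import Mathlib

/-!
The divided difference `f[s] = ∑ⱼ f(xⱼ) / ∏_{l ≠ j} (xⱼ - xₗ)` obeys the recursion
`(xⱼ - xᵢ) f[s] = f[s \ {i}] - f[s \ {j}]`. On the nodes `1, q, …, q^n` with values
`(c;q)_k`, the relation `(c;q)_{k+1} = (1 - c) (cq;q)_k` turns the first term into a rescaled
copy of the same divided difference with `c` replaced by `cq`, and induction on `n` gives
`c^n / (q;q)_n`. Peeling `k` factors off the infinite product,
`1 / (β q^{n+k};q)_∞ = (β q^n;q)_k / (β q^n;q)_∞`, so the theorem is this identity for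
`c = β q^n`, transported to the nodes `q^{k+1} / a = (q / a) q^k`.
-/

open Finset

section DividedDifference

variable {ι κ K : Type*} [Field K] [DecidableEq ι]

def dividedDiff (s : Finset ι) (x f : ι → K) : K :=
  ∑ j ∈ s, f j / ∏ l ∈ s.erase j, (x j - x l)

theorem dividedDiff_erase {s : Finset ι} {x : ι → K} (f : ι → K) (hx : Set.InjOn x s)
    {i : ι} (hi : i ∈ s) :
    dividedDiff (s.erase i) x f =
      ∑ j ∈ s, f j * (x j - x i) / ∏ l ∈ s.erase j, (x j - x l) := by
  rw [dividedDiff, ← add_sum_erase s _ hi, sub_self, mul_zero, zero_div, zero_add]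
  refine sum_congr rfl fun j hj => ?_
  obtain ⟨hji, hj⟩ := mem_erase.mp hj
  have hxji : x j - x i ≠ 0 := sub_ne_zero.mpr fun h => hji (hx hj hi h)
  rw [← mul_prod_erase (s.erase j) _ (mem_erase.mpr ⟨Ne.symm hji, hi⟩), erase_right_comm,
    mul_comm (x j - x i), mul_div_mul_right _ _ hxji]

theorem sub_mul_dividedDiff {s : Finset ι} {x : ι → K} (f : ι → K) (hx : Set.InjOn x s)
    {i j : ι} (hi : i ∈ s) (hj : j ∈ s) :
    (x j - x i) * dividedDiff s x f =
      dividedDiff (s.erase i) x f - dividedDiff (s.erase j) x f := by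
  rw [dividedDiff_erase f hx hi, dividedDiff_erase f hx hj, ← sum_sub_distrib, dividedDiff,
    mul_sum]
  refine sum_congr rfl fun m _ => ?_
  ring

theorem dividedDiff_map [DecidableEq κ] (s : Finset ι) (e : ι ↪ κ) (x f : κ → K) :
    dividedDiff (s.map e) x f = dividedDiff s (x ∘ e) (f ∘ e) := by
  simp only [dividedDiff, sum_map, ← map_erase, prod_map, Function.comp_apply]

theorem dividedDiff_const_mul_nodes (s : Finset ι) (t : K) (x f : ι → K) :
    dividedDiff s (fun j => t * x j) f = dividedDiff s x f / t ^ (#s - 1) := by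
  rw [dividedDiff, dividedDiff, sum_div]
  refine sum_congr rfl fun j hj => ?_
  simp_rw [← mul_sub, prod_mul_distrib, prod_const, card_erase_of_mem hj]
  rw [div_div, mul_comm]

theorem dividedDiff_const_mul (s : Finset ι) (x f : ι → K) (r : K) :
    dividedDiff s x (fun j => r * f j) = r * dividedDiff s x f := by
  simp only [dividedDiff, mul_sum, mul_div_assoc]

end DividedDifference

section QPochhammer

section CommRing

variable {R : Type*} [CommRing R]

def qPochhammer (c q : R) (n : ℕ) : R := ∏ i ∈ range n, (1 - c * q ^ i)

theorem qPochhammer_succ (c q : R) (n : ℕ) :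
    qPochhammer c q (n + 1) = qPochhammer c q n * (1 - c * q ^ n) :=
  prod_range_succ _ n

theorem qPochhammer_succ' (c q : R) (n : ℕ) :
    qPochhammer c q (n + 1) = (1 - c) * qPochhammer (c * q) q n := by
  simp only [qPochhammer, prod_range_succ', pow_succ', pow_zero, mul_one, mul_assoc, mul_comm]

theorem qPochhammer_ne_zero [IsDomain R] {c q : R} {n : ℕ} (h : ∀ i < n, c * q ^ i ≠ 1) :
    qPochhammer c q n ≠ 0 :=
  prod_ne_zero_iff.mpr fun i hi => sub_ne_zero.mpr (h i (mem_range.mp hi)).symm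

theorem injOn_pow_range [IsDomain R] {q : R} (hq0 : q ≠ 0) {n : ℕ}
    (hqn : qPochhammer q q n ≠ 0) :
    Set.InjOn (q ^ ·) (range (n + 1)) := by
  suffices key : ∀ i j, i < j → j ≤ n → q ^ i ≠ q ^ j by
    intro i hi j hj hij
    simp only [coe_range, Set.mem_Iio] at hi hj
    by_contra hne
    rcases Nat.lt_or_gt_of_ne hne with h | h
    · exact key i j h (by omega) hij
    · exact key j i h (by omega) hij.symm
  intro i j hij hjn heq
  obtain ⟨d, rfl⟩ := Nat.exists_eq_add_of_lt hij
  have hfactor : 1 - q * q ^ d ≠ 0 := prod_ne_zero_iff.mp hqn d (mem_range.mpr (by omega))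
  apply hfactor
  have : q ^ i * (1 - q * q ^ d) = 0 := by
    rw [mul_sub, mul_one, ← pow_succ', ← pow_add, ← add_assoc, ← heq, sub_self]
  exact (mul_eq_zero.mp this).resolve_left (pow_ne_zero _ hq0)

end CommRing

variable {K : Type*} [Field K]

theorem dividedDiff_pow_qPochhammer {q : K} (hq0 : q ≠ 0) (n : ℕ)
    (hqn : qPochhammer q q n ≠ 0) (c : K) :
    dividedDiff (range (n + 1)) (q ^ ·) (qPochhammer c q) = c ^ n / qPochhammer q q n := by
  induction n generalizing c with
  | zero => simp [dividedDiff, qPochhammer]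
  | succ n ih =>
    rw [qPochhammer_succ] at hqn
    obtain ⟨hqn', hlast⟩ := mul_ne_zero_iff.mp hqn
    have hrec := sub_mul_dividedDiff (qPochhammer c q) (injOn_pow_range hq0
      (by rwa [qPochhammer_succ])) (mem_range.mpr (Nat.succ_pos (n + 1)))
      (mem_range.mpr (Nat.lt_succ_self (n + 1)))
    have hdrop_first :
        (range (n + 2)).erase 0 = (range (n + 1)).map ⟨(· + 1), add_left_injective 1⟩ := by
      rw [range_add_one', erase_insert (by simp)]
    have hdrop_last : (range (n + 2)).erase (n + 1) = range (n + 1) := by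
      rw [range_add_one, erase_insert notMem_range_self]
    rw [hdrop_first, hdrop_last, dividedDiff_map, ih hqn'] at hrec
    have hnodes : (q ^ ·) ∘ (· + 1) = fun k => q * q ^ k := funext fun k => pow_succ' q k
    have hvalues : qPochhammer c q ∘ (· + 1) = fun k => (1 - c) * qPochhammer (c * q) q k :=
      funext fun k => qPochhammer_succ' c q k
    rw [Function.Embedding.coeFn_mk, hnodes, hvalues, dividedDiff_const_mul_nodes,
      dividedDiff_const_mul, ih hqn', card_range, Nat.add_sub_cancel, pow_zero] at hrec
    rw [qPochhammer_succ, eq_div_iff hqn]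
    field_simp at hrec
    apply mul_right_cancel₀ (pow_ne_zero n hq0)
    linear_combination -hrec

end QPochhammer

section InfiniteProduct

variable {𝕜 : Type*} [NormedField 𝕜] {q : 𝕜}

theorem qPochhammer_self_ne_zero (hq : ‖q‖ < 1) (n : ℕ) : qPochhammer q q n ≠ 0 :=
  qPochhammer_ne_zero fun i _ h => by
    have : ‖q * q ^ i‖ < 1 := by
      rw [← pow_succ', norm_pow]
      exact pow_lt_one₀ (norm_nonneg q) hq i.succ_ne_zero
    rw [h, norm_one] at this
    exact lt_irrefl 1 this

variable [CompleteSpace 𝕜]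

theorem multipliable_one_sub_mul_pow (hq : ‖q‖ < 1) (x : 𝕜) :
    Multipliable fun m : ℕ => 1 - x * q ^ m := by
  have hsum : Summable fun m : ℕ => ‖-(x * q ^ m)‖ := by
    simp only [norm_neg, norm_mul, norm_pow]
    exact (summable_geometric_of_lt_one (norm_nonneg q) hq).mul_left ‖x‖
  simp only [sub_eq_add_neg]
  exact multipliable_one_add_of_summable hsum

theorem tprod_one_sub_mul_pow_eq_qPochhammer_mul (hq : ‖q‖ < 1) (x : 𝕜) (k : ℕ) :
    ∏' m : ℕ, (1 - x * q ^ m) = qPochhammer x q k * ∏' m : ℕ, (1 - x * q ^ k * q ^ m) := by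
  have hshift : (fun m : ℕ => 1 - x * q ^ (m + k)) = fun m => 1 - x * q ^ k * q ^ m :=
    funext fun m => by rw [pow_add, mul_comm (q ^ m), ← mul_assoc]
  have hmult : Multipliable fun m : ℕ => 1 - x * q ^ (m + k) := by
    rw [hshift]
    exact multipliable_one_sub_mul_pow hq _
  rw [← hmult.prod_mul_tprod_nat_mul' (f := fun m => 1 - x * q ^ m), hshift, qPochhammer]

end InfiniteProduct

theorem divided_difference_jackson_general (q a β : ℂ) (n : ℕ)
    (hq : ‖q‖ < 1) (hq0 : q ≠ 0)
    (hβ : ∀ j : ℕ, β * q ^ j ≠ 1) :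
    ∑ j ∈ Finset.Icc 1 (n + 1),
        (1 / ∏' m : ℕ, (1 - β * q ^ (n + j - 1) * q ^ m)) /
          ∏ l ∈ (Finset.Icc 1 (n + 1)).erase j, (q ^ j / a - q ^ l / a)
      = (a * β) ^ n * q ^ (n * (n - 1)) /
          ((∏ j ∈ range n, (1 - q * q ^ j)) * ∏' m : ℕ, (1 - β * q ^ n * q ^ m)) := by
  set c := β * q ^ n
  have hc : ∀ k, qPochhammer c q k ≠ 0 := fun k => qPochhammer_ne_zero fun i _ => by
    simpa only [pow_add, ← mul_assoc] using hβ (n + i)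
  have hIcc : Icc 1 (n + 1) = (range (n + 1)).map (addRightEmbedding 1) := by
    rw [range_eq_Ico, map_add_right_Ico, zero_add, Ico_add_one_right_eq_Icc]
  have hnodes : (fun j : ℕ => q ^ j / a) ∘ addRightEmbedding 1 = fun k => q / a * q ^ k :=
    funext fun k => by simp only [Function.comp_apply, addRightEmbedding_apply, pow_succ']; ring
  have hvalues :
      (fun j => 1 / ∏' m : ℕ, (1 - β * q ^ (n + j - 1) * q ^ m)) ∘ addRightEmbedding 1
        = fun k => (∏' m : ℕ, (1 - c * q ^ m))⁻¹ * qPochhammer c q k := by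
    funext k
    rw [Function.comp_apply, addRightEmbedding_apply,
      show n + (k + 1) - 1 = n + k by omega, pow_add, ← mul_assoc,
      tprod_one_sub_mul_pow_eq_qPochhammer_mul hq c k, mul_inv_rev, inv_mul_cancel_right₀ (hc k),
      one_div]
  change dividedDiff (Icc 1 (n + 1)) (fun j => q ^ j / a)
      (fun j => 1 / ∏' m : ℕ, (1 - β * q ^ (n + j - 1) * q ^ m))
    = (a * β) ^ n * q ^ (n * (n - 1)) / (qPochhammer q q n * ∏' m : ℕ, (1 - c * q ^ m))
  rw [hIcc, dividedDiff_map, hnodes, hvalues, dividedDiff_const_mul_nodes, dividedDiff_const_mul,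
    dividedDiff_pow_qPochhammer hq0 n (qPochhammer_self_ne_zero hq n), card_range,
    Nat.add_sub_cancel]
  have hpow : q ^ (n * n) = q ^ n * q ^ (n * (n - 1)) := by
    rw [← pow_add, Nat.mul_sub_one, Nat.add_sub_cancel' (Nat.le_mul_self n)]
  simp only [c, mul_pow, ← pow_mul, hpow, div_pow]
  field_simp

/-- **The divided-difference computation behind Jackson's formula.**
Let `q, a, β ∈ ℂ` with `|q| < 1`, `q ≠ 0`, `a ≠ 0`, `β q^j ≠ 1` for all `j ≥ 0`, and
let `n ≥ 1` (the points `q^1/a, …, q^(n+1)/a` are then pairwise distinct).  The `n`-th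
iterated divided difference of `x ↦ 1/((a β x q^(n-1);q)_∞)` at the points
`x_j = q^j/a` (note `(a β x_j q^(n-1);q)_∞ = (β q^(n+j-1);q)_∞`) satisfies
`∑_{j=1}^{n+1} (1/(β q^(n+j-1);q)_∞) / ∏_{l ≠ j} (q^j/a - q^l/a)
  = (a β)^n q^(n(n-1)) / ((q;q)_n (β q^n;q)_∞)`. -/
theorem divided_difference_jackson (q a β : ℂ) (n : ℕ) (hn : 1 ≤ n)
    (hq : ‖q‖ < 1) (hq0 : q ≠ 0) (ha : a ≠ 0)
    (hβ : ∀ j : ℕ, β * q ^ j ≠ 1) :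
    ∑ j ∈ Finset.Icc 1 (n + 1),
        (1 / ∏' m : ℕ, (1 - β * q ^ (n + j - 1) * q ^ m)) /
          ∏ l ∈ (Finset.Icc 1 (n + 1)).erase j, (q ^ j / a - q ^ l / a)
      = (a * β) ^ n * q ^ (n * (n - 1)) /
          ((∏ j ∈ range n, (1 - q * q ^ j)) * ∏' m : ℕ, (1 - β * q ^ n * q ^ m)) :=
  divided_difference_jackson_general q a β n hq hq0 hβ
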